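/- The split operation is a right inverse of merge up to the merged component's reliability: for any properties triple p = (C, R, D), component c_m ∈ C, and fresh names c₁, c₂ ∉ C \ {c_m}, merging c₁ and c₂ back into c_m after splitting c_m into c₁ and c₂ recovers the original component set and the original reliability function: merge(split(p, c_m, c₁, c₂), c₁, c₂, c_m) has component set C and reliability function R. -/
import Mathlib


/-- System properties: components, reliability lower bounds, dependencies.
Effects range over components and the system; `Option.none` plays the role of sys. -/
structure SysProps (N : Type*) where
  C : Set N
  R : N → ℝ
  D : Set (Set N × Set (Option N))

open Classical in
/-- Merge components c₁ and c₂ into cₘ. -/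
noncomputable def mergeComp {N : Type*} (p : SysProps N) (c₁ c₂ cₘ : N) : SysProps N where
  C := {cₘ} ∪ (p.C \ {c₁, c₂})
  R := fun n => if n = cₘ then min (p.R c₁) (p.R c₂) else p.R n
  D := (fun d =>
    (if c₁ ∈ d.1 ∨ c₂ ∈ d.1 then {cₘ} ∪ (d.1 \ {c₁, c₂}) else d.1,
     if Option.some c₁ ∈ d.2 ∨ Option.some c₂ ∈ d.2 then
       {Option.some cₘ} ∪ (d.2 \ {Option.some c₁, Option.some c₂}) else d.2)) '' p.D

open Classical in
/-- Split component cₘ into c₁ and c₂ (each fully dependent on the other). -/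
noncomputable def splitComp {N : Type*} (p : SysProps N) (cₘ c₁ c₂ : N) : SysProps N where
  C := {c₁, c₂} ∪ (p.C \ {cₘ})
  R := fun n => if n = c₁ ∨ n = c₂ then p.R cₘ else p.R n
  D := ⋃ d ∈ p.D,
    if cₘ ∈ d.1 then
      {({c₁, c₂} ∪ (d.1 \ {cₘ}), d.2),
       (insert c₁ (d.1 \ {cₘ}), d.2 ∪ {Option.some c₂}),
       (insert c₂ (d.1 \ {cₘ}), d.2 ∪ {Option.some c₁})}
    else if Option.some cₘ ∈ d.2 then
      {(d.1, (d.2 \ {Option.some cₘ}) ∪ {Option.some c₁, Option.some c₂}),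
       (d.1, (d.2 \ {Option.some cₘ}) ∪ {Option.some c₁}),
       (d.1, (d.2 \ {Option.some cₘ}) ∪ {Option.some c₂})}
    else {d}

/-- Merging c₁ and c₂ back into cₘ after splitting cₘ into c₁ and c₂ recovers
the original component set and the original reliability function. -/
theorem merge_split_roundtrip {N : Type*} (p : SysProps N) (cₘ c₁ c₂ : N)
    (hm : cₘ ∈ p.C) (h₁ : c₁ ∉ p.C \ {cₘ}) (h₂ : c₂ ∉ p.C \ {cₘ}) (h₁₂ : c₁ ≠ c₂) :
    (mergeComp (splitComp p cₘ c₁ c₂) c₁ c₂ cₘ).C = p.C ∧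
    ∀ n ∈ p.C, (mergeComp (splitComp p cₘ c₁ c₂) c₁ c₂ cₘ).R n = p.R n := by
  constructor
  · ext x
    simp only [mergeComp, splitComp, Set.mem_union, Set.mem_diff, Set.mem_singleton_iff,
      Set.mem_insert_iff]
    constructor
    · rintro (rfl | ⟨((rfl|rfl)|⟨hx,hxm⟩), hx12⟩)
      · exact hm
      · exact absurd rfl (not_or.mp hx12).1
      · exact absurd (Or.inr rfl) hx12
      · exact hx
    · intro hx
      by_cases hxm : x = cₘ
      · exact Or.inl hxm
      · refine Or.inr ⟨Or.inr ⟨hx, hxm⟩, ?_⟩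
        rintro (rfl|rfl)
        · exact h₁ ⟨hx, hxm⟩
        · exact h₂ ⟨hx, hxm⟩
  · intro n hn
    simp only [mergeComp, splitComp]
    by_cases hnm : n = cₘ
    · subst hnm
      simp [min_self]
    · have hn1 : n ≠ c₁ := fun h => h₁ (h ▸ ⟨hn, hnm⟩)
      have hn2 : n ≠ c₂ := fun h => h₂ (h ▸ ⟨hn, hnm⟩)
      simp [hnm, hn1, hn2]
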